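/- arXiv:2208.10206 — 5 statements merged into one kernel-verified Lean document; each statement's English description precedes it below -/
import Mathlib

section
/- The common neighbourhood energy of the complete graph $K_m$ ($m \geq 2$) equals $2(m-1)(m-2)$. -/
open Matrix Polynomial

/-- Common neighbourhood matrix of a simple graph. -/
noncomputable def cnMatrix {V : Type*} [DecidableEq V] (G : SimpleGraph V) : Matrix V V ℝ :=
  Matrix.of fun i j => if i = j then 0 else ((G.commonNeighbors i j).ncard : ℝ)

lemma cnMatrix_isHermitian {V : Type*} [DecidableEq V] (G : SimpleGraph V) :
    (cnMatrix G).IsHermitian := by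
  ext i j
  simp only [cnMatrix, Matrix.conjTranspose_apply, Matrix.of_apply, star_trivial,
    SimpleGraph.commonNeighbors]
  rw [Set.inter_comm]
  rcases eq_or_ne i j with h | h
  · subst h; rfl
  · simp [h, h.symm]

/-- CN-energy: sum of absolute values of eigenvalues of the CN matrix. -/
noncomputable def cnEnergy {V : Type*} [Fintype V] [DecidableEq V] (G : SimpleGraph V) : ℝ :=
  ∑ i, |(cnMatrix_isHermitian G).eigenvalues i|

lemma cnMatrix_complete_apply (m : ℕ) (hm : 2 ≤ m) (i j : Fin m) :
    cnMatrix (SimpleGraph.completeGraph (Fin m)) i j =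
      if i = j then 0 else (m : ℝ) - 2 := by
  rcases eq_or_ne i j with h | h
  · simp [cnMatrix, h]
  · have hG : SimpleGraph.completeGraph (Fin m) = (⊤ : SimpleGraph (Fin m)) := rfl
    have hcn : ((⊤ : SimpleGraph (Fin m)).commonNeighbors i j).ncard = m - 2 := by
      rw [SimpleGraph.commonNeighbors_top_eq]
      rw [Set.ncard_diff (Set.subset_univ _)]
      rw [Set.ncard_univ, Set.ncard_pair h, Nat.card_eq_fintype_card, Fintype.card_fin]
    simp only [cnMatrix, Matrix.of_apply, hG, hcn, if_neg h]
    rw [Nat.cast_sub hm]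
    norm_num

/-- Sum of the eigenvalues of a real symmetric matrix is the trace. -/
lemma sum_eigenvalues_eq_trace {n : ℕ} {A : Matrix (Fin n) (Fin n) ℝ}
    (hA : A.IsHermitian) : ∑ i, hA.eigenvalues i = A.trace := by
  have h := hA.spectral_theorem
  have : A.trace = (Matrix.diagonal (RCLike.ofReal ∘ hA.eigenvalues) : Matrix (Fin n) (Fin n) ℝ).trace := by
    conv_lhs => rw [h]
    rw [Unitary.conjStarAlgAut_apply, Matrix.trace_mul_cycle]
    rw [show (star (hA.eigenvectorUnitary : Matrix (Fin n) (Fin n) ℝ)) *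
        (hA.eigenvectorUnitary : Matrix (Fin n) (Fin n) ℝ) = 1 from
      (Matrix.mem_unitaryGroup_iff').mp (hA.eigenvectorUnitary).2, one_mul]
  rw [this, Matrix.trace_diagonal]
  simp

/-- The CN-energy of the complete graph `K_m` (`m ≥ 2`) equals `2(m-1)(m-2)`. -/
theorem stmt2 (m : ℕ) (hm : 2 ≤ m) :
    cnEnergy (SimpleGraph.completeGraph (Fin m)) = 2 * ((m : ℝ) - 1) * ((m : ℝ) - 2) := by
  have hm2 : (2 : ℝ) ≤ (m : ℝ) := by exact_mod_cast hm
  have hc0 : (0 : ℝ) ≤ (m : ℝ) - 2 := by linarith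
  have hm0 : (0 : ℝ) < (m : ℝ) := by positivity
  set M : Matrix (Fin m) (Fin m) ℝ := cnMatrix (SimpleGraph.completeGraph (Fin m)) with hMdef
  have hA : M.IsHermitian := cnMatrix_isHermitian _
  have hMapp : ∀ i j, M i j = if i = j then 0 else (m : ℝ) - 2 :=
    fun i j => cnMatrix_complete_apply m hm i j
  -- the quadratic matrix identity  M² = (m-2)² • M + (m-1)(m-2)² • 1
  have hM2 : M * M = (((m : ℝ) - 2) ^ 2) • M + (((m : ℝ) - 1) * ((m : ℝ) - 2) ^ 2) • 1 := by
    ext i k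
    simp only [Matrix.mul_apply, Matrix.add_apply, Matrix.smul_apply, Matrix.one_apply,
      hMapp, smul_eq_mul]
    have hterm : ∀ j : Fin m,
        (if i = j then 0 else (m : ℝ) - 2) * (if j = k then 0 else (m : ℝ) - 2) =
        if j = i ∨ j = k then 0 else ((m : ℝ) - 2) ^ 2 := by
      intro j
      rcases eq_or_ne j i with rfl | h1
      · simp
      · rcases eq_or_ne j k with rfl | h2
        · simp [h1]
        · simp [Ne.symm h1, h1, h2, sq]
    rw [Finset.sum_congr rfl fun j _ => hterm j, Finset.sum_ite, Finset.sum_const,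
      Finset.sum_const, smul_zero, zero_add, nsmul_eq_mul]
    rcases eq_or_ne i k with rfl | h
    · have hfil : Finset.univ.filter (fun j : Fin m => ¬(j = i ∨ j = i)) =
          Finset.univ \ {i} := by
        ext j; simp
      rw [hfil, Finset.card_sdiff_of_subset (by simp), Finset.card_univ, Fintype.card_fin,
        Finset.card_singleton, Nat.cast_sub (by omega)]
      simp only [if_pos rfl]
      push_cast
      ring
    · have hfil : Finset.univ.filter (fun j : Fin m => ¬(j = i ∨ j = k)) =
          Finset.univ \ {i, k} := by
        ext j; simp [not_or]
      rw [hfil, Finset.card_sdiff_of_subset (by simp), Finset.card_univ, Fintype.card_fin,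
        Finset.card_insert_of_notMem (by simp [h]), Finset.card_singleton,
        Nat.cast_sub hm]
      simp only [if_neg h]
      push_cast
      ring
  -- every eigenvalue t satisfies t² = (m-2)² t + (m-1)(m-2)²
  have hquad : ∀ i, (hA.eigenvalues i) ^ 2 =
      ((m : ℝ) - 2) ^ 2 * hA.eigenvalues i + ((m : ℝ) - 1) * ((m : ℝ) - 2) ^ 2 := by
    intro i
    have hv := hA.mulVec_eigenvectorBasis i
    have hvne : ∃ j, (hA.eigenvectorBasis i) j ≠ 0 := by
      by_contra h
      push_neg at h
      exact hA.eigenvectorBasis.orthonormal.ne_zero i (by ext j; exact h j)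
    obtain ⟨j, hj⟩ := hvne
    have h2 : (M * M) *ᵥ ⇑(hA.eigenvectorBasis i) =
        ((hA.eigenvalues i) ^ 2) • ⇑(hA.eigenvectorBasis i) := by
      rw [← Matrix.mulVec_mulVec, hv, Matrix.mulVec_smul, hv, smul_smul, sq]
    rw [hM2] at h2
    have h3 : (((m : ℝ) - 2) ^ 2 * hA.eigenvalues i +
        ((m : ℝ) - 1) * ((m : ℝ) - 2) ^ 2) • ⇑(hA.eigenvectorBasis i)
        = ((hA.eigenvalues i) ^ 2) • ⇑(hA.eigenvectorBasis i) := by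
      rw [← h2, Matrix.add_mulVec, Matrix.smul_mulVec, Matrix.smul_mulVec, hv,
        Matrix.one_mulVec, smul_smul, add_smul, mul_smul]
    have h4 := congrFun h3 j
    simp only [Pi.smul_apply, smul_eq_mul] at h4
    have := mul_right_cancel₀ hj h4
    linarith [this]
  -- each eigenvalue is -(m-2) or (m-1)(m-2), hence a formula for |t|
  have habs : ∀ i, |hA.eigenvalues i| =
      (((m : ℝ) - 2) * hA.eigenvalues i + 2 * ((m : ℝ) - 1) * ((m : ℝ) - 2)) / (m : ℝ) := by
    intro i
    have hq := hquad i
    have hfact : (hA.eigenvalues i + ((m : ℝ) - 2)) *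
        (hA.eigenvalues i - ((m : ℝ) - 1) * ((m : ℝ) - 2)) = 0 := by
      linear_combination hq
    rcases mul_eq_zero.mp hfact with h | h
    · have htc : hA.eigenvalues i = -((m : ℝ) - 2) := by linarith
      rw [htc, abs_neg, abs_of_nonneg hc0]
      field_simp
      ring
    · have htc : hA.eigenvalues i = ((m : ℝ) - 1) * ((m : ℝ) - 2) := by linarith
      have hpos : 0 ≤ hA.eigenvalues i := by
        rw [htc]; exact mul_nonneg (by linarith) hc0
      rw [abs_of_nonneg hpos, htc]
      field_simp
      ring
  -- trace is zero
  have htr : ∑ i, hA.eigenvalues i = 0 := by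
    rw [sum_eigenvalues_eq_trace hA]
    unfold Matrix.trace
    simp [Matrix.diag, hMapp]
  -- conclude
  have hE : cnEnergy (SimpleGraph.completeGraph (Fin m)) = ∑ i, |hA.eigenvalues i| := rfl
  rw [hE, Finset.sum_congr rfl (fun i _ => habs i),
    ← Finset.sum_div, Finset.sum_add_distrib, ← Finset.mul_sum, htr, mul_zero, zero_add,
    Finset.sum_const, Finset.card_univ, Fintype.card_fin, nsmul_eq_mul]
  field_simp
end

section
/- For every integer $n \geq 2$: $4n(2n-1) - 2(2n-3)(2n-2) > 0$ and $4n(2n+1) - 2(2n-4)(2n-3) - 12 > 0$. Consequently, the CN-energy of the commuting conjugacy class graph of the semidihedral group $SD_{8n}$ is strictly less than the CN-energy of the complete graph on the same number of vertices, i.e., this graph is not CN-hyperenergetic. -/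
/-- For `n ≥ 2`: `4n(2n-1) - 2(2n-3)(2n-2) > 0` and `4n(2n+1) - 2(2n-4)(2n-3) - 12 > 0`.
Consequently the CN-energy of the commuting conjugacy class graph of `SD_{8n}`
(`2(2n-2)(2n-3)` on `2n+1` vertices for even `n`, `2(2n-3)(2n-4)+12` on `2n+2` vertices
for odd `n`) is strictly less than `E_CN(K_N) = 2(N-1)(N-2)`, i.e. the graph is not
CN-hyperenergetic. -/
theorem stmt4 (n : ℕ) (hn : 2 ≤ n) :
    (0 < 4 * (n : ℤ) * (2 * n - 1) - 2 * (2 * n - 3) * (2 * n - 2)) ∧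
    (0 < 4 * (n : ℤ) * (2 * n + 1) - 2 * (2 * n - 4) * (2 * n - 3) - 12) ∧
    (Even n →
      2 * (2 * (n : ℤ) - 2) * (2 * n - 3) <
        2 * ((2 * n + 1 : ℤ) - 1) * ((2 * n + 1 : ℤ) - 2)) ∧
    (Odd n →
      2 * (2 * (n : ℤ) - 3) * (2 * n - 4) + 12 <
        2 * ((2 * n + 2 : ℤ) - 1) * ((2 * n + 2 : ℤ) - 2)) := by
  have h : (2 : ℤ) ≤ n := by exact_mod_cast hn
  exact ⟨by nlinarith, by nlinarith, fun _ => by nlinarith, fun _ => by nlinarith⟩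
end

section
/- For every integer $n \geq 2$: $4n(2n+1) - 2(2n-3)(2n-4) = 8(4n-3) > 0$ and $4n(2n-1) - 2(2n-3)(2n-2) = 4(4n-3) > 0$. Hence the commuting conjugacy class graph of $V_{8n}$ is not CN-hyperenergetic. -/
/-- For `n ≥ 2`: `4n(2n+1) - 2(2n-3)(2n-4) = 8(4n-3) > 0` and
`4n(2n-1) - 2(2n-3)(2n-2) = 4(4n-3) > 0`. Hence the commuting conjugacy class graph of
`V_{8n}` (CN-energy `2(2n-3)(2n-4)` on `2n+2` vertices for even `n`, `2(2n-2)(2n-3)` on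
`2n+1` vertices for odd `n`) is not CN-hyperenergetic. -/
theorem stmt7 (n : ℕ) (hn : 2 ≤ n) :
    (4 * (n : ℤ) * (2 * n + 1) - 2 * (2 * n - 3) * (2 * n - 4) = 8 * (4 * n - 3)) ∧
    (0 < 8 * (4 * (n : ℤ) - 3)) ∧
    (4 * (n : ℤ) * (2 * n - 1) - 2 * (2 * n - 3) * (2 * n - 2) = 4 * (4 * n - 3)) ∧
    (0 < 4 * (4 * (n : ℤ) - 3)) ∧
    (Even n →
      2 * (2 * (n : ℤ) - 3) * (2 * n - 4) <
        2 * ((2 * n + 2 : ℤ) - 1) * ((2 * n + 2 : ℤ) - 2)) ∧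
    (Odd n →
      2 * (2 * (n : ℤ) - 2) * (2 * n - 3) <
        2 * ((2 * n + 1 : ℤ) - 1) * ((2 * n + 1 : ℤ) - 2)) := by
  have h : (2:ℤ) ≤ n := by exact_mod_cast hn
  refine ⟨by ring, by linarith, by ring, by linarith, fun _ => by nlinarith, fun _ => by nlinarith⟩
end

section
/- For every prime $p$ and positive integers $m \geq n \geq 1$: $2\big(p^{m+n}-p^{m+n-2}-1\big)\big(p^{m+n}-p^{m+n-2}-2\big) > 4(p^{m+n-1}-p^{m+n-2}-1)(p^{m+n-1}-p^{m+n-2}-2) + 2(p^n-p^{n-1})(p^m-p^{m-1}-1)(p^m-p^{m-1}-2)$. -/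
theorem core (x B C : ℤ) (hx : 2 ≤ x) (hB : 1 ≤ B) (hC : 1 ≤ C) :
    4 * (x*B^2*C - B^2*C - 1) * (x*B^2*C - B^2*C - 2)
      + 2 * (x*B - B) * (x*B*C - B*C - 1) * (x*B*C - B*C - 2)
    < 2 * (x^2*B^2*C - B^2*C - 1) * (x^2*B^2*C - B^2*C - 2) := by
  obtain ⟨X, hX, rfl⟩ : ∃ X, 0 ≤ X ∧ x = X + 2 := ⟨x - 2, by linarith, by ring⟩
  obtain ⟨b, hb, rfl⟩ : ∃ b, 0 ≤ b ∧ B = b + 1 := ⟨B - 1, by linarith, by ring⟩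
  obtain ⟨c, hc, rfl⟩ : ∃ c, 0 ≤ c ∧ C = c + 1 := ⟨C - 1, by linarith, by ring⟩
  linarith [mul_nonneg (mul_nonneg (pow_nonneg hX 0) (pow_nonneg hb 0)) (pow_nonneg hc 1),
    mul_nonneg (mul_nonneg (pow_nonneg hX 0) (pow_nonneg hb 0)) (pow_nonneg hc 2),
    mul_nonneg (mul_nonneg (pow_nonneg hX 0) (pow_nonneg hb 1)) (pow_nonneg hc 0),
    mul_nonneg (mul_nonneg (pow_nonneg hX 0) (pow_nonneg hb 1)) (pow_nonneg hc 1),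
    mul_nonneg (mul_nonneg (pow_nonneg hX 0) (pow_nonneg hb 1)) (pow_nonneg hc 2),
    mul_nonneg (mul_nonneg (pow_nonneg hX 0) (pow_nonneg hb 2)) (pow_nonneg hc 0),
    mul_nonneg (mul_nonneg (pow_nonneg hX 0) (pow_nonneg hb 2)) (pow_nonneg hc 1),
    mul_nonneg (mul_nonneg (pow_nonneg hX 0) (pow_nonneg hb 2)) (pow_nonneg hc 2),
    mul_nonneg (mul_nonneg (pow_nonneg hX 0) (pow_nonneg hb 3)) (pow_nonneg hc 0),
    mul_nonneg (mul_nonneg (pow_nonneg hX 0) (pow_nonneg hb 3)) (pow_nonneg hc 1),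
    mul_nonneg (mul_nonneg (pow_nonneg hX 0) (pow_nonneg hb 3)) (pow_nonneg hc 2),
    mul_nonneg (mul_nonneg (pow_nonneg hX 0) (pow_nonneg hb 4)) (pow_nonneg hc 0),
    mul_nonneg (mul_nonneg (pow_nonneg hX 0) (pow_nonneg hb 4)) (pow_nonneg hc 1),
    mul_nonneg (mul_nonneg (pow_nonneg hX 0) (pow_nonneg hb 4)) (pow_nonneg hc 2),
    mul_nonneg (mul_nonneg (pow_nonneg hX 1) (pow_nonneg hb 0)) (pow_nonneg hc 0),
    mul_nonneg (mul_nonneg (pow_nonneg hX 1) (pow_nonneg hb 0)) (pow_nonneg hc 1),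
    mul_nonneg (mul_nonneg (pow_nonneg hX 1) (pow_nonneg hb 0)) (pow_nonneg hc 2),
    mul_nonneg (mul_nonneg (pow_nonneg hX 1) (pow_nonneg hb 1)) (pow_nonneg hc 0),
    mul_nonneg (mul_nonneg (pow_nonneg hX 1) (pow_nonneg hb 1)) (pow_nonneg hc 1),
    mul_nonneg (mul_nonneg (pow_nonneg hX 1) (pow_nonneg hb 1)) (pow_nonneg hc 2),
    mul_nonneg (mul_nonneg (pow_nonneg hX 1) (pow_nonneg hb 2)) (pow_nonneg hc 0),
    mul_nonneg (mul_nonneg (pow_nonneg hX 1) (pow_nonneg hb 2)) (pow_nonneg hc 1),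
    mul_nonneg (mul_nonneg (pow_nonneg hX 1) (pow_nonneg hb 2)) (pow_nonneg hc 2),
    mul_nonneg (mul_nonneg (pow_nonneg hX 1) (pow_nonneg hb 3)) (pow_nonneg hc 0),
    mul_nonneg (mul_nonneg (pow_nonneg hX 1) (pow_nonneg hb 3)) (pow_nonneg hc 1),
    mul_nonneg (mul_nonneg (pow_nonneg hX 1) (pow_nonneg hb 3)) (pow_nonneg hc 2),
    mul_nonneg (mul_nonneg (pow_nonneg hX 1) (pow_nonneg hb 4)) (pow_nonneg hc 0),
    mul_nonneg (mul_nonneg (pow_nonneg hX 1) (pow_nonneg hb 4)) (pow_nonneg hc 1),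
    mul_nonneg (mul_nonneg (pow_nonneg hX 1) (pow_nonneg hb 4)) (pow_nonneg hc 2),
    mul_nonneg (mul_nonneg (pow_nonneg hX 2) (pow_nonneg hb 0)) (pow_nonneg hc 0),
    mul_nonneg (mul_nonneg (pow_nonneg hX 2) (pow_nonneg hb 0)) (pow_nonneg hc 1),
    mul_nonneg (mul_nonneg (pow_nonneg hX 2) (pow_nonneg hb 0)) (pow_nonneg hc 2),
    mul_nonneg (mul_nonneg (pow_nonneg hX 2) (pow_nonneg hb 1)) (pow_nonneg hc 0),
    mul_nonneg (mul_nonneg (pow_nonneg hX 2) (pow_nonneg hb 1)) (pow_nonneg hc 1),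
    mul_nonneg (mul_nonneg (pow_nonneg hX 2) (pow_nonneg hb 1)) (pow_nonneg hc 2),
    mul_nonneg (mul_nonneg (pow_nonneg hX 2) (pow_nonneg hb 2)) (pow_nonneg hc 0),
    mul_nonneg (mul_nonneg (pow_nonneg hX 2) (pow_nonneg hb 2)) (pow_nonneg hc 1),
    mul_nonneg (mul_nonneg (pow_nonneg hX 2) (pow_nonneg hb 2)) (pow_nonneg hc 2),
    mul_nonneg (mul_nonneg (pow_nonneg hX 2) (pow_nonneg hb 3)) (pow_nonneg hc 0),
    mul_nonneg (mul_nonneg (pow_nonneg hX 2) (pow_nonneg hb 3)) (pow_nonneg hc 1),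
    mul_nonneg (mul_nonneg (pow_nonneg hX 2) (pow_nonneg hb 3)) (pow_nonneg hc 2),
    mul_nonneg (mul_nonneg (pow_nonneg hX 2) (pow_nonneg hb 4)) (pow_nonneg hc 0),
    mul_nonneg (mul_nonneg (pow_nonneg hX 2) (pow_nonneg hb 4)) (pow_nonneg hc 1),
    mul_nonneg (mul_nonneg (pow_nonneg hX 2) (pow_nonneg hb 4)) (pow_nonneg hc 2),
    mul_nonneg (mul_nonneg (pow_nonneg hX 3) (pow_nonneg hb 0)) (pow_nonneg hc 0),
    mul_nonneg (mul_nonneg (pow_nonneg hX 3) (pow_nonneg hb 0)) (pow_nonneg hc 1),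
    mul_nonneg (mul_nonneg (pow_nonneg hX 3) (pow_nonneg hb 0)) (pow_nonneg hc 2),
    mul_nonneg (mul_nonneg (pow_nonneg hX 3) (pow_nonneg hb 1)) (pow_nonneg hc 0),
    mul_nonneg (mul_nonneg (pow_nonneg hX 3) (pow_nonneg hb 1)) (pow_nonneg hc 1),
    mul_nonneg (mul_nonneg (pow_nonneg hX 3) (pow_nonneg hb 1)) (pow_nonneg hc 2),
    mul_nonneg (mul_nonneg (pow_nonneg hX 3) (pow_nonneg hb 2)) (pow_nonneg hc 0),
    mul_nonneg (mul_nonneg (pow_nonneg hX 3) (pow_nonneg hb 2)) (pow_nonneg hc 1),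
    mul_nonneg (mul_nonneg (pow_nonneg hX 3) (pow_nonneg hb 2)) (pow_nonneg hc 2),
    mul_nonneg (mul_nonneg (pow_nonneg hX 3) (pow_nonneg hb 3)) (pow_nonneg hc 0),
    mul_nonneg (mul_nonneg (pow_nonneg hX 3) (pow_nonneg hb 3)) (pow_nonneg hc 1),
    mul_nonneg (mul_nonneg (pow_nonneg hX 3) (pow_nonneg hb 3)) (pow_nonneg hc 2),
    mul_nonneg (mul_nonneg (pow_nonneg hX 3) (pow_nonneg hb 4)) (pow_nonneg hc 0),
    mul_nonneg (mul_nonneg (pow_nonneg hX 3) (pow_nonneg hb 4)) (pow_nonneg hc 1),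
    mul_nonneg (mul_nonneg (pow_nonneg hX 3) (pow_nonneg hb 4)) (pow_nonneg hc 2),
    mul_nonneg (mul_nonneg (pow_nonneg hX 4) (pow_nonneg hb 0)) (pow_nonneg hc 0),
    mul_nonneg (mul_nonneg (pow_nonneg hX 4) (pow_nonneg hb 0)) (pow_nonneg hc 1),
    mul_nonneg (mul_nonneg (pow_nonneg hX 4) (pow_nonneg hb 0)) (pow_nonneg hc 2),
    mul_nonneg (mul_nonneg (pow_nonneg hX 4) (pow_nonneg hb 1)) (pow_nonneg hc 0),
    mul_nonneg (mul_nonneg (pow_nonneg hX 4) (pow_nonneg hb 1)) (pow_nonneg hc 1),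
    mul_nonneg (mul_nonneg (pow_nonneg hX 4) (pow_nonneg hb 1)) (pow_nonneg hc 2),
    mul_nonneg (mul_nonneg (pow_nonneg hX 4) (pow_nonneg hb 2)) (pow_nonneg hc 0),
    mul_nonneg (mul_nonneg (pow_nonneg hX 4) (pow_nonneg hb 2)) (pow_nonneg hc 1),
    mul_nonneg (mul_nonneg (pow_nonneg hX 4) (pow_nonneg hb 2)) (pow_nonneg hc 2),
    mul_nonneg (mul_nonneg (pow_nonneg hX 4) (pow_nonneg hb 3)) (pow_nonneg hc 0),
    mul_nonneg (mul_nonneg (pow_nonneg hX 4) (pow_nonneg hb 3)) (pow_nonneg hc 1),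
    mul_nonneg (mul_nonneg (pow_nonneg hX 4) (pow_nonneg hb 3)) (pow_nonneg hc 2),
    mul_nonneg (mul_nonneg (pow_nonneg hX 4) (pow_nonneg hb 4)) (pow_nonneg hc 0),
    mul_nonneg (mul_nonneg (pow_nonneg hX 4) (pow_nonneg hb 4)) (pow_nonneg hc 1),
    mul_nonneg (mul_nonneg (pow_nonneg hX 4) (pow_nonneg hb 4)) (pow_nonneg hc 2)]

/-- For a prime `p` and integers `m ≥ n ≥ 1`:
`2(p^{m+n}-p^{m+n-2}-1)(p^{m+n}-p^{m+n-2}-2) >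
 4(p^{m+n-1}-p^{m+n-2}-1)(p^{m+n-1}-p^{m+n-2}-2)
  + 2(pⁿ-p^{n-1})(pᵐ-p^{m-1}-1)(pᵐ-p^{m-1}-2)`. -/
theorem stmt15 (p m n : ℕ) (hp : p.Prime) (hn : 1 ≤ n) (hmn : n ≤ m) :
    4 * ((p : ℤ) ^ (m + n - 1) - (p : ℤ) ^ (m + n - 2) - 1)
        * ((p : ℤ) ^ (m + n - 1) - (p : ℤ) ^ (m + n - 2) - 2)
      + 2 * ((p : ℤ) ^ n - (p : ℤ) ^ (n - 1))
        * ((p : ℤ) ^ m - (p : ℤ) ^ (m - 1) - 1) * ((p : ℤ) ^ m - (p : ℤ) ^ (m - 1) - 2)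
    < 2 * ((p : ℤ) ^ (m + n) - (p : ℤ) ^ (m + n - 2) - 1)
        * ((p : ℤ) ^ (m + n) - (p : ℤ) ^ (m + n - 2) - 2) := by
  obtain ⟨b, rfl⟩ : ∃ b, n = b + 1 := ⟨n - 1, by omega⟩
  obtain ⟨c, rfl⟩ : ∃ c, m = b + 1 + c := ⟨m - (b + 1), by omega⟩
  have hx : (2 : ℤ) ≤ (p : ℤ) := by exact_mod_cast hp.two_le
  have hp1 : (1 : ℤ) ≤ (p : ℤ) := by linarith
  have hB : (1 : ℤ) ≤ (p : ℤ) ^ b := one_le_pow₀ hp1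
  have hC : (1 : ℤ) ≤ (p : ℤ) ^ c := one_le_pow₀ hp1
  have h := core (p : ℤ) ((p : ℤ) ^ b) ((p : ℤ) ^ c) hx hB hC
  have e1 : b + 1 + c + (b + 1) - 1 = b + b + c + 1 := by omega
  have e2 : b + 1 + c + (b + 1) - 2 = b + b + c := by omega
  have e3 : b + 1 - 1 = b := by omega
  have e4 : b + 1 + c - 1 = b + c := by omega
  have e5 : b + 1 + c + (b + 1) = b + b + c + 2 := by omega
  rw [e1, e2, e3, e4, e5]
  have q1 : (p : ℤ) ^ (b + b + c + 1) = (p:ℤ) * ((p:ℤ)^b)^2 * (p:ℤ)^c := by ring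
  have q2 : (p : ℤ) ^ (b + b + c) = ((p:ℤ)^b)^2 * (p:ℤ)^c := by ring
  have q3 : (p : ℤ) ^ (b + 1) = (p:ℤ) * (p:ℤ)^b := by ring
  have q4 : (p : ℤ) ^ (b + 1 + c) = (p:ℤ) * (p:ℤ)^b * (p:ℤ)^c := by ring
  have q5 : (p : ℤ) ^ (b + c) = (p:ℤ)^b * (p:ℤ)^c := by ring
  have q6 : (p : ℤ) ^ (b + b + c + 2) = (p:ℤ)^2 * ((p:ℤ)^b)^2 * (p:ℤ)^c := by ring
  rw [q1, q2, q3, q4, q5, q6]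
  linarith [h]
end

section
/- For the dihedral group $D_{2n}$ with $n \geq 3$ odd, the CN-energy of its commuting conjugacy class graph equals $\tfrac{1}{2}(n-3)(n-5)$, and its CN-spectrum is $\{(-\tfrac{1}{2}(n-5))^{(n-3)/2},\ (\tfrac{1}{4}(n-3)(n-5))^{1},\ 0^{1}\}$. -/
open Matrix Polynomial

/-- Vertices of the commuting conjugacy class graph: conjugacy classes of non-central elements. -/
abbrev cccVerts (G : Type*) [Group G] : Type _ :=
  {c : ConjClasses G // c.carrier ∩ (Subgroup.center G : Set G) = ∅}

/-- The commuting conjugacy class graph of a group. -/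
def ccc (G : Type*) [Group G] : SimpleGraph (cccVerts G) where
  Adj c d := c ≠ d ∧ ∃ a ∈ c.val.carrier, ∃ b ∈ d.val.carrier,
      a * b = b * a
  symm := ⟨by
    rintro c d ⟨hne, a, ha, b, hb, hab⟩
    exact ⟨hne.symm, b, hb, a, ha, hab.symm⟩⟩
  loopless := ⟨by rintro c ⟨hne, -⟩; exact hne rfl⟩

/-- Disjoint union `⋃ i, (l i) K_{m i}` of complete graphs. -/
def unionCompletes {ι : Type*} (l m : ι → ℕ) : SimpleGraph (Σ i, Fin (l i) × Fin (m i)) where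
  Adj a b := a ≠ b ∧ ∃ (i : ι) (c : Fin (l i)) (x y : Fin (m i)),
      a = ⟨i, (c, x)⟩ ∧ b = ⟨i, (c, y)⟩
  symm := ⟨by
    rintro a b ⟨hne, i, c, x, y, rfl, rfl⟩
    exact ⟨hne.symm, i, c, y, x, rfl, rfl⟩⟩
  loopless := ⟨fun a h => h.1 rfl⟩

/-- The group `U_{6n} = ⟨x, y : x^{2n} = y^3 = 1, x⁻¹yx = y⁻¹⟩`. -/
def U6nRels (n : ℕ) : Set (FreeGroup (Fin 2)) :=
  {FreeGroup.of 0 ^ (2 * n), FreeGroup.of 1 ^ 3,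
    (FreeGroup.of 0)⁻¹ * FreeGroup.of 1 * FreeGroup.of 0 * FreeGroup.of 1}

def U6n (n : ℕ) : Type := PresentedGroup (U6nRels n)

instance (n : ℕ) : Group (U6n n) := by unfold U6n; infer_instance

section AuxCN
open Matrix Polynomial DihedralGroup

lemma eval_charpoly {n : Type*} [Fintype n] [DecidableEq n] (M : Matrix n n ℝ) (t : ℝ) :
    M.charpoly.eval t = (Matrix.of fun i j => (if i = j then t else 0) - M i j).det := by
  rw [Matrix.charpoly, ← Polynomial.coe_evalRingHom, RingHom.map_det]
  congr 1
  ext i j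
  simp only [RingHom.mapMatrix_apply, Matrix.map_apply, Matrix.charmatrix_apply,
    Matrix.diagonal_apply, Matrix.of_apply, coe_evalRingHom, eval_sub, eval_C,
    apply_ite (eval t), eval_X, eval_zero]

lemma charpoly_Kmatrix (m : ℕ) (hm : 0 < m) (a : ℝ) :
    (Matrix.of fun i j : Fin m => if i = j then (0:ℝ) else a).charpoly
      = (X + C a) ^ (m - 1) * (X - C ((m - 1 : ℝ) * a)) := by
  have key : ∀ t : ℝ, t + a ≠ 0 →
      ((Matrix.of fun i j : Fin m => if i = j then (0:ℝ) else a).charpoly).eval t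
        = ((X + C a) ^ (m - 1) * (X - C ((m - 1 : ℝ) * a))).eval t := by
    intro t ht
    rw [_root_.eval_charpoly]
    have hM : (Matrix.of fun i j : Fin m => (if i = j then t else 0) - (if i = j then (0:ℝ) else a))
        = Matrix.diagonal (fun _ : Fin m => t + a)
          + Matrix.replicateCol Unit (fun _ : Fin m => -a) * Matrix.replicateRow Unit (fun _ : Fin m => (1:ℝ)) := by
      ext i j
      rcases eq_or_ne i j with rfl | hij
      · simp [Matrix.add_apply, Matrix.mul_apply, Matrix.replicateCol, Matrix.replicateRow, Matrix.diagonal_apply]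
      · simp [Matrix.add_apply, Matrix.mul_apply, Matrix.replicateCol, Matrix.replicateRow, Matrix.diagonal_apply, hij]
    have hdet : IsUnit (Matrix.diagonal (fun _ : Fin m => t + a)).det := by
      simpa [Matrix.det_diagonal] using (pow_ne_zero m ht).isUnit
    simp only [Matrix.of_apply]
    rw [hM, Matrix.det_add_replicateCol_mul_replicateRow hdet]
    have hinv : (Matrix.diagonal (fun _ : Fin m => t + a))⁻¹
        = Matrix.diagonal (fun _ : Fin m => (t + a)⁻¹) := by
      apply Matrix.inv_eq_right_inv
      rw [Matrix.diagonal_mul_diagonal]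
      simp [mul_inv_cancel₀ ht]
    rw [Matrix.det_diagonal, hinv]
    have h1 : (1 + Matrix.replicateRow Unit (fun _ : Fin m => (1:ℝ)) * Matrix.diagonal (fun _ : Fin m => (t + a)⁻¹) * Matrix.replicateCol Unit (fun _ : Fin m => -a)).det
        = 1 + (m : ℝ) * (t + a)⁻¹ * (-a) := by
      rw [Matrix.det_unique]
      simp [Matrix.add_apply, Matrix.mul_apply, Matrix.replicateRow, Matrix.replicateCol, Matrix.diagonal_apply,
        Finset.mul_sum, Finset.sum_mul, mul_comm]
      ring
    rw [h1]
    simp only [eval_mul, eval_pow, eval_add, eval_sub, eval_X, eval_C, Finset.prod_const,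
      Finset.card_univ, Fintype.card_fin]
    have hmm : (t + a) ^ m = (t + a) ^ (m - 1) * (t + a) := by
      rw [← pow_succ]
      congr 1
      omega
    rw [hmm]
    have hx : (t + a) * (1 + (m:ℝ) * (t + a)⁻¹ * (-a)) = t - ((m:ℝ) - 1) * a := by
      field_simp; ring
    calc (t+a)^(m-1) * (t+a) * (1 + (m:ℝ)*(t+a)⁻¹*(-a))
        = (t+a)^(m-1) * ((t+a) * (1 + (m:ℝ)*(t+a)⁻¹*(-a))) := by ring
      _ = _ := by rw [hx]
  have hroot : {x : ℝ | ((Matrix.of fun i j : Fin m => if i = j then (0:ℝ) else a).charpoly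
      - (X + C a) ^ (m - 1) * (X - C ((m - 1 : ℝ) * a))).IsRoot x}.Infinite := by
    apply Set.Infinite.mono (s := {x : ℝ | x ≠ -a})
    · intro t ht
      have := key t (by intro h; apply ht; linarith)
      simp [Polynomial.IsRoot, this]
    · have : ({x : ℝ | x ≠ -a}) = ({-a}ᶜ : Set ℝ) := rfl
      rw [this]
      exact (Set.finite_singleton _).infinite_compl
  have := Polynomial.eq_zero_of_infinite_isRoot _ hroot
  linear_combination (norm := ring_nf) this

lemma charmatrix_eq {n : Type*} [Fintype n] [DecidableEq n] {R : Type*} [CommRing R]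
    (M : Matrix n n R) :
    M.charmatrix = Matrix.diagonal (fun _ => (X : R[X])) - M.map C := by
  ext i j
  rw [Matrix.charmatrix_apply]
  simp [Matrix.sub_apply]

lemma charpoly_unitary_conj {n : Type*} [Fintype n] [DecidableEq n]
    (U D : Matrix n n ℝ) (hU : U * star U = 1) :
    (U * D * star U).charpoly = D.charpoly := by
  have hmap : ∀ A B : Matrix n n ℝ, (A * B).map (C : ℝ →+* ℝ[X]) = A.map C * B.map C := by
    intro A B; exact Matrix.map_mul
  have hone : (1 : Matrix n n ℝ).map (C : ℝ →+* ℝ[X]) = 1 := by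
    ext i j; by_cases h : i = j <;> simp [h, Matrix.one_apply]
  have key : (U * D * star U).charmatrix
      = U.map C * D.charmatrix * (star U).map C := by
    rw [charmatrix_eq, charmatrix_eq, Matrix.mul_sub, Matrix.sub_mul]
    congr 1
    · have hdiag : Matrix.diagonal (fun _ => (X : ℝ[X])) = Matrix.scalar n X := rfl
      rw [hdiag, ← Matrix.scalar_commute X (fun r => Commute.all _ _) (U.map C),
        Matrix.mul_assoc, ← hmap, hU, hone, Matrix.mul_one]
    · rw [← hmap, ← hmap]
  rw [Matrix.charpoly, Matrix.charpoly, key, Matrix.det_mul, Matrix.det_mul, mul_comm,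
    ← mul_assoc, ← Matrix.det_mul, ← hmap, mul_eq_one_comm.mp hU, hone, Matrix.det_one, one_mul]

lemma charpoly_diagonal {n : Type*} [Fintype n] [DecidableEq n] (d : n → ℝ) :
    (Matrix.diagonal d).charpoly = ∏ i, (X - C (d i)) := by
  rw [Matrix.charpoly]
  have : (Matrix.diagonal d).charmatrix = Matrix.diagonal (fun i => X - C (d i)) := by
    ext i j
    rcases eq_or_ne i j with rfl | h
    · simp [Matrix.charmatrix_apply]
    · simp [Matrix.charmatrix_apply, h, Matrix.diagonal_apply_ne _ h]
  rw [this, Matrix.det_diagonal]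

lemma charpoly_eq_prod_eigs {n : Type*} [Fintype n] [DecidableEq n]
    {A : Matrix n n ℝ} (hA : A.IsHermitian) :
    A.charpoly = ∏ i, (X - C (hA.eigenvalues i)) := by
  conv_lhs => rw [hA.spectral_theorem]
  rw [Unitary.conjStarAlgAut_apply]
  rw [charpoly_unitary_conj _ _ ((Matrix.mem_unitaryGroup_iff).mp hA.eigenvectorUnitary.2)]
  have : (RCLike.ofReal ∘ hA.eigenvalues : n → ℝ) = hA.eigenvalues := by
    ext i; simp
  rw [this, _root_.charpoly_diagonal]

variable {n : ℕ}

variable {n : ℕ}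

lemma conj_r_mem (g : DihedralGroup n) (i : ZMod n) :
    g * r i * g⁻¹ = r i ∨ g * r i * g⁻¹ = r (-i) := by
  rcases g with j | j
  · left
    show r j * r i * (r j)⁻¹ = r i
    have : (r j)⁻¹ = r (-j) := rfl
    rw [this, r_mul_r, r_mul_r]; ring_nf
  · right
    show sr j * r i * (sr j)⁻¹ = r (-i)
    have : (sr j)⁻¹ = sr j := rfl
    rw [this, sr_mul_r, sr_mul_sr]; ring_nf

lemma isConj_r_iff (i x : ZMod n) :
    IsConj (r i) (r x : DihedralGroup n) ↔ x = i ∨ x = -i := by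
  constructor
  · rw [isConj_iff]
    rintro ⟨g, hg⟩
    rcases conj_r_mem g i with h | h <;> rw [hg] at h
    · left; exact (r.injEq _ _).mp h
    · right; exact (r.injEq _ _).mp h
  · rintro (rfl | rfl)
    · exact IsConj.refl _
    · rw [isConj_iff]
      refine ⟨sr 0, ?_⟩
      have h0 : (sr (0 : ZMod n))⁻¹ = sr 0 := rfl
      rw [h0, sr_mul_r, sr_mul_sr]
      ring_nf

lemma not_isConj_r_sr (i j : ZMod n) : ¬ IsConj (r i) (sr j : DihedralGroup n) := by
  rw [isConj_iff]
  rintro ⟨g, hg⟩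
  rcases conj_r_mem g i with h | h <;> rw [hg] at h <;> cases h

lemma conj_sr_form (g : DihedralGroup n) (i : ZMod n) :
    ∃ j, g * sr i * g⁻¹ = sr j := by
  rcases g with k | k
  · exact ⟨i - 2 * k, by
      show r k * sr i * (r k)⁻¹ = _
      have : (r k)⁻¹ = r (-k) := rfl
      rw [this, r_mul_sr, sr_mul_r]; ring_nf⟩
  · exact ⟨2 * k - i, by
      show sr k * sr i * (sr k)⁻¹ = _
      have : (sr k)⁻¹ = sr k := rfl
      rw [this, sr_mul_sr, r_mul_sr]; ring_nf⟩

lemma two_unit (hno : Odd n) : IsUnit (2 : ZMod n) := by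
  have := (ZMod.isUnit_iff_coprime 2 n).mpr (by simpa using hno.coprime_two_left)
  simpa using this

lemma isConj_sr (hno : Odd n) (i j : ZMod n) : IsConj (sr i : DihedralGroup n) (sr j) := by
  obtain ⟨u, hu⟩ := two_unit hno
  set k : ZMod n := ((u⁻¹ : (ZMod n)ˣ) : ZMod n) * (i - j) with hk
  rw [isConj_iff]
  refine ⟨r k, ?_⟩
  have hinv : (r k : DihedralGroup n)⁻¹ = r (-k) := rfl
  rw [hinv, r_mul_sr, sr_mul_r]
  congr 1
  have h2u : (2 : ZMod n) * ((u⁻¹ : (ZMod n)ˣ) : ZMod n) = 1 := by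
    rw [← hu, ← Units.val_mul, mul_inv_cancel, Units.val_one]
  calc i - k + -k = i - (2 * ((u⁻¹ : (ZMod n)ˣ) : ZMod n)) * (i - j) := by rw [hk]; ring
    _ = j := by rw [h2u]; ring

lemma eq_zero_of_two_mul (hno : Odd n) {i : ZMod n} (h : 2 * i = 0) : i = 0 := by
  obtain ⟨u, hu⟩ := two_unit hno
  have := congrArg (fun x => ((u⁻¹ : (ZMod n)ˣ) : ZMod n) * x) h
  simp only [mul_zero] at this
  rw [← mul_assoc] at this
  have h2u : ((u⁻¹ : (ZMod n)ˣ) : ZMod n) * 2 = 1 := by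
    rw [← hu, ← Units.val_mul, inv_mul_cancel, Units.val_one]
  rwa [h2u, one_mul] at this

lemma zmod_two_ne_zero (hn : 3 ≤ n) : (2 : ZMod n) ≠ 0 := by
  haveI : NeZero n := ⟨by omega⟩
  intro h
  have : ((2 : ℕ) : ZMod n) = 0 := by push_cast; exact h
  rw [ZMod.natCast_eq_zero_iff] at this
  exact absurd (Nat.le_of_dvd (by norm_num) this) (by omega)

lemma r_mem_center_iff (hno : Odd n) (i : ZMod n) :
    r i ∈ Subgroup.center (DihedralGroup n) ↔ i = 0 := by
  constructor
  · intro h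
    have := (Subgroup.mem_center_iff.mp h) (sr 0)
    rw [sr_mul_r, r_mul_sr] at this
    have h2 : (0 : ZMod n) + i = 0 - i := (sr.injEq _ _).mp this
    apply eq_zero_of_two_mul hno
    linear_combination h2
  · rintro rfl
    rw [show (r 0 : DihedralGroup n) = 1 from rfl]
    exact Subgroup.one_mem _

lemma sr_not_mem_center (hn : 3 ≤ n) (j : ZMod n) :
    sr j ∉ Subgroup.center (DihedralGroup n) := by
  intro h
  have := (Subgroup.mem_center_iff.mp h) (r 1)
  rw [r_mul_sr, sr_mul_r] at this
  have h2 : j - 1 = j + 1 := (sr.injEq _ _).mp this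
  exact zmod_two_ne_zero hn (by linear_combination -h2)

-- === vertices ===

lemma mem_carrier_iff {a x : DihedralGroup n} :
    x ∈ (ConjClasses.mk a).carrier ↔ IsConj a x := by
  rw [ConjClasses.mem_carrier_iff_mk_eq, ConjClasses.mk_eq_mk_iff_isConj, isConj_comm]

lemma srClass_vert (hn : 3 ≤ n) :
    (ConjClasses.mk (sr 0 : DihedralGroup n)).carrier
      ∩ (Subgroup.center (DihedralGroup n) : Set (DihedralGroup n)) = ∅ := by
  rw [Set.eq_empty_iff_forall_notMem]
  rintro x ⟨hx, hxc⟩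
  rw [mem_carrier_iff, isConj_iff] at hx
  obtain ⟨g, hg⟩ := hx
  obtain ⟨j, hj⟩ := conj_sr_form g (0 : ZMod n)
  rw [hj] at hg
  subst hg
  exact sr_not_mem_center hn j hxc

lemma rotClass_vert (hn : 3 ≤ n) (hno : Odd n) {i : ZMod n} (hi : i ≠ 0) :
    (ConjClasses.mk (r i : DihedralGroup n)).carrier
      ∩ (Subgroup.center (DihedralGroup n) : Set (DihedralGroup n)) = ∅ := by
  rw [Set.eq_empty_iff_forall_notMem]
  rintro x ⟨hx, hxc⟩
  rw [mem_carrier_iff] at hx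
  rcases x with j | j
  · rcases (isConj_r_iff i j).mp hx with rfl | rfl
    · exact hi ((r_mem_center_iff hno _).mp hxc)
    · exact hi (neg_eq_zero.mp ((r_mem_center_iff hno _).mp hxc))
  · exact not_isConj_r_sr i j hx

/-- the reflection-class vertex -/
def v0 (hn : 3 ≤ n) : cccVerts (DihedralGroup n) :=
  ⟨ConjClasses.mk (sr 0), srClass_vert hn⟩

lemma vertex_cases (hno : Odd n) (c : cccVerts (DihedralGroup n)) :
    c.val = ConjClasses.mk (sr 0) ∨
      ∃ i : ZMod n, i ≠ 0 ∧ c.val = ConjClasses.mk (r i) := by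
  obtain ⟨a, ha⟩ := ConjClasses.mk_surjective c.val
  rcases a with i | j
  · rcases eq_or_ne i 0 with rfl | hi
    · exfalso
      have h1 : (1 : DihedralGroup n) ∈ c.val.carrier := by
        rw [← ha, mem_carrier_iff, show (r 0 : DihedralGroup n) = 1 from rfl]
      have := c.2
      rw [Set.eq_empty_iff_forall_notMem] at this
      exact this 1 ⟨h1, Subgroup.one_mem _⟩
    · exact Or.inr ⟨i, hi, ha.symm⟩
  · left
    rw [← ha, ConjClasses.mk_eq_mk_iff_isConj]
    exact isConj_sr hno j 0

lemma not_adj_v0 (hn : 3 ≤ n) (hno : Odd n) (c : cccVerts (DihedralGroup n)) :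
    ¬ (ccc (DihedralGroup n)).Adj (v0 hn) c := by
  rintro ⟨hne, a, ha, b, hb, hab⟩
  -- a is a reflection
  have ha' : IsConj (sr 0 : DihedralGroup n) a := mem_carrier_iff.mp ha
  rw [isConj_iff] at ha'
  obtain ⟨g, hg⟩ := ha'
  obtain ⟨p, hp⟩ := conj_sr_form g (0 : ZMod n)
  rw [hp] at hg
  subst hg
  rcases vertex_cases hno c with hc | ⟨i, hi, hc⟩
  · exact hne (Subtype.ext hc.symm)
  · -- b is r i or r (-i)
    have hb' : IsConj (r i : DihedralGroup n) b := by
      rw [hc] at hb; exact mem_carrier_iff.mp hb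
    have hbr : b = r i ∨ b = r (-i) := by
      rcases b with j | j
      · rcases (isConj_r_iff i j).mp hb' with rfl | rfl
        · exact Or.inl rfl
        · exact Or.inr rfl
      · exact absurd hb' (not_isConj_r_sr i j)
    have key : ∀ j : ZMod n, j ≠ 0 → sr p * r j ≠ r j * sr p := by
      intro j hj h
      rw [sr_mul_r, r_mul_sr] at h
      have h2 : p + j = p - j := (sr.injEq _ _).mp h
      exact hj (eq_zero_of_two_mul hno (by linear_combination h2))
    rcases hbr with rfl | rfl
    · exact key i hi hab
    · exact key (-i) (neg_ne_zero.mpr hi) hab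

lemma ccc_adj_iff (hn : 3 ≤ n) (hno : Odd n) (c d : cccVerts (DihedralGroup n)) :
    (ccc (DihedralGroup n)).Adj c d ↔ c ≠ d ∧ c ≠ v0 hn ∧ d ≠ v0 hn := by
  constructor
  · intro h
    refine ⟨h.1, ?_, ?_⟩
    · rintro rfl; exact not_adj_v0 hn hno d h
    · rintro rfl; exact not_adj_v0 hn hno c h.symm
  · rintro ⟨hne, hc, hd⟩
    obtain ⟨i, hi, hci⟩ : ∃ i : ZMod n, i ≠ 0 ∧ c.val = ConjClasses.mk (r i) := by
      rcases vertex_cases hno c with h | h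
      · exact absurd (Subtype.ext h) hc
      · exact h
    obtain ⟨j, hj, hdj⟩ : ∃ j : ZMod n, j ≠ 0 ∧ d.val = ConjClasses.mk (r j) := by
      rcases vertex_cases hno d with h | h
      · exact absurd (Subtype.ext h) hd
      · exact h
    refine ⟨hne, r i, ?_, r j, ?_, ?_⟩
    · rw [hci]; exact mem_carrier_iff.mpr (IsConj.refl _)
    · rw [hdj]; exact mem_carrier_iff.mpr (IsConj.refl _)
    · rw [r_mul_r, r_mul_r, add_comm]

lemma ccc_commonNeighbors (hn : 3 ≤ n) (hno : Odd n) {c d : cccVerts (DihedralGroup n)}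
    (hcd : c ≠ d) (hc : c ≠ v0 hn) (hd : d ≠ v0 hn) :
    (ccc (DihedralGroup n)).commonNeighbors c d
      = Set.univ \ {c, d, v0 hn} := by
  ext k
  simp only [SimpleGraph.commonNeighbors, SimpleGraph.mem_neighborSet, Set.mem_inter_iff,
    Set.mem_diff, Set.mem_univ, true_and, Set.mem_insert_iff, Set.mem_singleton_iff,
    ccc_adj_iff hn hno]
  constructor
  · rintro ⟨⟨h1, -, h3⟩, ⟨h2, -, -⟩⟩
    push_neg
    exact ⟨fun h => h1 h.symm, fun h => h2 h.symm, h3⟩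
  · intro h
    push_neg at h
    exact ⟨⟨fun h' => h.1 h'.symm, hc, h.2.2⟩, ⟨fun h' => h.2.1 h'.symm, hd, h.2.2⟩⟩

section Equiv
variable (m : ℕ) (hm : 1 ≤ m)

lemma hn_of (hm : 1 ≤ m) : 3 ≤ 2 * m + 1 := by omega
lemma hodd_of : Odd (2 * m + 1) := ⟨m, by ring⟩

instance : NeZero (2 * m + 1) := ⟨Nat.succ_ne_zero _⟩

lemma rot_ne_zero {k : ℕ} (h1 : 0 < k) (h2 : k < 2 * m + 1) :
    ((k : ℕ) : ZMod (2 * m + 1)) ≠ 0 := by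
  intro h
  rw [ZMod.natCast_eq_zero_iff] at h
  have := Nat.le_of_dvd h1 h
  omega

/-- the vertex map -/
def vmap : Fin m ⊕ Unit → cccVerts (DihedralGroup (2 * m + 1))
  | Sum.inl k => ⟨ConjClasses.mk (r (((k : ℕ) + 1 : ℕ) : ZMod (2 * m + 1))),
      rotClass_vert (hn_of m hm) (hodd_of m) (rot_ne_zero m (by omega) (by omega))⟩
  | Sum.inr _ => v0 (hn_of m hm)

lemma vmap_bijective : Function.Bijective (vmap m hm) := by
  constructor
  · rintro (k | u) (l | v) h
    · have h' := congrArg Subtype.val h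
      simp only [vmap] at h'
      rw [ConjClasses.mk_eq_mk_iff_isConj, isConj_r_iff] at h'
      have hkl : ((l : ℕ) + 1 : ℕ) < 2 * m + 1 := by omega
      have hkk : ((k : ℕ) + 1 : ℕ) < 2 * m + 1 := by omega
      rcases h' with h' | h'
      · have := congrArg ZMod.val h'
        rw [ZMod.val_cast_of_lt hkl, ZMod.val_cast_of_lt hkk] at this
        have : (l : ℕ) = (k : ℕ) := by omega
        simp [Fin.ext_iff, this]
      · exfalso
        have : ((((l : ℕ) + 1 : ℕ) : ZMod (2 * m + 1)) + (((k : ℕ) + 1 : ℕ) : ZMod (2 * m + 1))) = 0 := by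
          rw [h']; ring
        rw [← Nat.cast_add] at this
        exact rot_ne_zero m (by omega) (by omega) this
    · exfalso
      have h' := congrArg Subtype.val h
      simp only [vmap, v0] at h'
      rw [ConjClasses.mk_eq_mk_iff_isConj] at h'
      exact not_isConj_r_sr _ _ h'
    · exfalso
      have h' := congrArg Subtype.val h
      simp only [vmap, v0] at h'
      rw [ConjClasses.mk_eq_mk_iff_isConj] at h'
      exact not_isConj_r_sr _ _ h'.symm
    · rfl
  · intro c
    rcases vertex_cases (hodd_of m) c with hc | ⟨i, hi, hc⟩
    · exact ⟨Sum.inr (), (Subtype.ext hc).symm⟩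
    · set v := ZMod.val i with hv
      have hvlt : v < 2 * m + 1 := ZMod.val_lt i
      have hvpos : 0 < v := Nat.pos_of_ne_zero (fun h => hi ((ZMod.val_eq_zero i).mp h))
      rcases le_or_gt v m with hvm | hvm
      · refine ⟨Sum.inl ⟨v - 1, by omega⟩, ?_⟩
        apply Subtype.ext
        simp only [vmap, hc]
        congr 1
        have : (v - 1) + 1 = v := by omega
        rw [this, hv]
        exact congrArg r (ZMod.natCast_rightInverse i)
      · -- use -i
        have hmk : ConjClasses.mk (r i : DihedralGroup (2*m+1)) = ConjClasses.mk (r (-i)) := by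
          rw [ConjClasses.mk_eq_mk_iff_isConj, isConj_r_iff]
          exact Or.inr rfl
        have hnegval : (-i).val = 2 * m + 1 - v := by
          rw [ZMod.neg_val]
          simp only [hv]
          rw [if_neg hi]
        refine ⟨Sum.inl ⟨(2 * m + 1 - v) - 1, by omega⟩, ?_⟩
        apply Subtype.ext
        simp only [vmap, hc, hmk]
        congr 1
        have : ((2 * m + 1 - v) - 1) + 1 = 2 * m + 1 - v := by omega
        rw [this, ← hnegval]
        exact congrArg r (ZMod.natCast_rightInverse (-i))

/-- the vertex equivalence -/
noncomputable def vertEquiv : Fin m ⊕ Unit ≃ cccVerts (DihedralGroup (2 * m + 1)) :=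
  Equiv.ofBijective (vmap m hm) (vmap_bijective m hm)

lemma vertEquiv_inl (k : Fin m) : (vertEquiv m hm (Sum.inl k)).val
    = ConjClasses.mk (r (((k : ℕ) + 1 : ℕ) : ZMod (2 * m + 1))) := rfl

lemma vertEquiv_inr (u : Unit) : vertEquiv m hm (Sum.inr u) = v0 (hn_of m hm) := rfl

lemma vertEquiv_inl_ne_v0 (k : Fin m) : vertEquiv m hm (Sum.inl k) ≠ v0 (hn_of m hm) := by
  intro h
  have := (vertEquiv m hm).injective (h.trans (vertEquiv_inr m hm ()).symm)
  exact Sum.inl_ne_inr this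

end Equiv

end AuxCN

open Polynomial in
/-- For odd `n ≥ 3`, the CN-energy of the commuting conjugacy class graph of the
dihedral group of order `2n` equals `½(n-3)(n-5)`, and its CN-spectrum is
`{(-(n-5)/2)^{(n-3)/2}, ((n-3)(n-5)/4)^1, 0^1}`. -/
theorem stmt19 (n : ℕ) (hn : 3 ≤ n) (hno : Odd n)
    [Fintype (cccVerts (DihedralGroup n))] [DecidableEq (cccVerts (DihedralGroup n))] :
    cnEnergy (ccc (DihedralGroup n)) = 1 / 2 * ((n : ℝ) - 3) * ((n : ℝ) - 5) ∧
    (cnMatrix (ccc (DihedralGroup n))).charpoly =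
      (X + C (((n : ℝ) - 5) / 2)) ^ ((n - 3) / 2) *
        (X - C (((n : ℝ) - 3) * ((n : ℝ) - 5) / 4)) * X := by
  classical
  obtain ⟨m, rfl⟩ := hno
  have hm : 1 ≤ m := by omega
  set G := DihedralGroup (2 * m + 1) with hG
  set e := vertEquiv m hm with he_def
  set N : ℝ := ((2 * m + 1 : ℕ) : ℝ) with hN_def
  have hN : N = 2 * (m : ℝ) + 1 := by rw [hN_def]; push_cast; ring
  set a : ℝ := ((m - 2 : ℕ) : ℝ) with ha_def
  set K : Matrix (Fin m) (Fin m) ℝ := Matrix.of fun k l => if k = l then (0:ℝ) else a with hK_def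
  have hcard : Fintype.card (cccVerts G) = m + 1 := by
    rw [← Fintype.card_congr e]
    simp
  -- the common-neighbor count
  have hncard : ∀ c d : cccVerts G, c ≠ d → c ≠ v0 (hn_of m hm) → d ≠ v0 (hn_of m hm) →
      ((ccc G).commonNeighbors c d).ncard = m - 2 := by
    intro c d hcd hc hd
    rw [ccc_commonNeighbors (hn_of m hm) (hodd_of m) hcd hc hd]
    have h3 : ({c, d, v0 (hn_of m hm)} : Set (cccVerts G)).ncard = 3 := by
      rw [Set.ncard_insert_of_notMem (by simp [hcd, hc]),
        Set.ncard_pair hd]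
    rw [Set.ncard_diff (Set.subset_univ _), Set.ncard_univ, Nat.card_eq_fintype_card, hcard, h3]
    omega
  -- reindexed matrix is the block matrix
  have hre : Matrix.reindex e.symm e.symm (cnMatrix (ccc G)) = Matrix.fromBlocks K 0 0 0 := by
    ext p q
    rw [Matrix.reindex_apply, Matrix.submatrix_apply]
    simp only [Equiv.symm_symm]
    have hempty : ∀ c : cccVerts G, ((ccc G).commonNeighbors c (v0 (hn_of m hm))).ncard = 0 ∧
        ((ccc G).commonNeighbors (v0 (hn_of m hm)) c).ncard = 0 := by
      intro c
      constructor <;>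
      · rw [Set.ncard_eq_zero]
        rw [Set.eq_empty_iff_forall_notMem]
        intro x hx
        rw [SimpleGraph.mem_commonNeighbors] at hx
        first
          | exact not_adj_v0 (hn_of m hm) (hodd_of m) x hx.2
          | exact not_adj_v0 (hn_of m hm) (hodd_of m) x hx.1
    match p, q with
    | Sum.inl k, Sum.inl l =>
      rcases eq_or_ne k l with rfl | hkl
      · simp [cnMatrix, K]
      · have hne : e (Sum.inl k) ≠ e (Sum.inl l) := fun h => hkl (Sum.inl.inj (e.injective h))
        rw [show (Matrix.fromBlocks K 0 0 0 : Matrix (Fin m ⊕ Unit) (Fin m ⊕ Unit) ℝ)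
            (Sum.inl k) (Sum.inl l) = K k l from rfl, hK_def]
        simp only [cnMatrix, Matrix.of_apply, if_neg hne, if_neg hkl]
        rw [hncard _ _ hne (vertEquiv_inl_ne_v0 m hm k) (vertEquiv_inl_ne_v0 m hm l)]
    | Sum.inl k, Sum.inr u =>
      have hne : e (Sum.inl k) ≠ e (Sum.inr u) := fun h => Sum.inl_ne_inr (e.injective h)
      have hv : e (Sum.inr u) = v0 (hn_of m hm) := vertEquiv_inr m hm u
      simp only [cnMatrix, Matrix.of_apply, if_neg hne, hv, (hempty _).1]
      simp [Matrix.fromBlocks]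
    | Sum.inr u, Sum.inl l =>
      have hne : e (Sum.inr u) ≠ e (Sum.inl l) := fun h => Sum.inr_ne_inl (e.injective h)
      have hv : e (Sum.inr u) = v0 (hn_of m hm) := vertEquiv_inr m hm u
      simp only [cnMatrix, Matrix.of_apply, if_neg hne, hv, (hempty _).2]
      simp [Matrix.fromBlocks]
    | Sum.inr u, Sum.inr w =>
      have huw : u = w := rfl
      subst huw
      simp only [cnMatrix, Matrix.of_apply, if_pos rfl]
      simp [Matrix.fromBlocks]
  -- charpoly of the block matrix
  have hcpK : K.charpoly = (X + C a) ^ (m - 1) * (X - C (((m:ℝ) - 1) * a)) :=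
    charpoly_Kmatrix m hm a
  have hcp0 : (0 : Matrix Unit Unit ℝ).charpoly = X := by
    rw [Matrix.charpoly, Matrix.det_unique]
    simp [Matrix.charmatrix_apply]
  have hcpB : (cnMatrix (ccc G)).charpoly
      = (X + C a) ^ (m - 1) * (X - C (((m:ℝ) - 1) * a)) * X := by
    have h1 := Matrix.charpoly_reindex e.symm (cnMatrix (ccc G))
    rw [hre] at h1
    rw [← h1, Matrix.charpoly, Matrix.charmatrix_fromBlocks]
    rw [show ((0 : Matrix (Fin m) Unit ℝ).map (C : ℝ → ℝ[X])) = 0 from Matrix.map_zero _ (map_zero C),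
      show ((0 : Matrix Unit (Fin m) ℝ).map (C : ℝ → ℝ[X])) = 0 from Matrix.map_zero _ (map_zero C),
      neg_zero, neg_zero, Matrix.det_fromBlocks_zero₂₁, ← Matrix.charpoly, ← Matrix.charpoly, hcpK, hcp0]
  -- translate constants
  have hexp : (2 * m + 1 - 3) / 2 = m - 1 := by omega
  have hpow : (X + C a) ^ (m - 1) = (X + C ((N - 5) / 2)) ^ (m - 1) := by
    rcases eq_or_lt_of_le hm with h1 | h2
    · rw [← h1]
      simp
    · have : a = (N - 5) / 2 := by
        rw [ha_def, hN, Nat.cast_sub (by omega)]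
        push_cast
        ring
      rw [this]
  have hconst : ((m:ℝ) - 1) * a = (N - 3) * (N - 5) / 4 := by
    rcases eq_or_lt_of_le hm with h1 | h2
    · rw [← h1, hN, ← h1]
      norm_num
    · rw [ha_def, hN, Nat.cast_sub (by omega)]
      push_cast
      ring
  have hcp : (cnMatrix (ccc G)).charpoly
      = (X + C ((N - 5) / 2)) ^ ((2 * m + 1 - 3) / 2) * (X - C ((N - 3) * (N - 5) / 4)) * X := by
    rw [hcpB, hpow, hconst, hexp]
  refine ⟨?_, hcp⟩
  -- energy
  set eig := (cnMatrix_isHermitian (ccc G)).eigenvalues with heig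
  set s : Multiset ℝ := Multiset.replicate (m - 1) (-((N - 5) / 2))
    + ((N - 3) * (N - 5) / 4 ::ₘ {(0:ℝ)}) with hs_def
  have hsprod : (Multiset.map (fun r => X - C r) s).prod
      = (X + C ((N - 5) / 2)) ^ ((2 * m + 1 - 3) / 2) * (X - C ((N - 3) * (N - 5) / 4)) * X := by
    rw [hs_def, Multiset.map_add, Multiset.prod_add, Multiset.map_replicate,
      Multiset.prod_replicate, Multiset.map_cons, Multiset.prod_cons, Multiset.map_singleton,
      Multiset.prod_singleton, map_neg, sub_neg_eq_add, map_zero, sub_zero, hexp]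
    ring
  have hroots : Finset.univ.val.map eig = s := by
    have h1 : (Multiset.map (fun r => X - C r) (Finset.univ.val.map eig)).prod
        = (cnMatrix (ccc G)).charpoly := by
      rw [Multiset.map_map, charpoly_eq_prod_eigs (cnMatrix_isHermitian (ccc G)),
        Finset.prod_eq_multiset_prod]
      rfl
    have h2 := congrArg Polynomial.roots (h1.trans (hcp.trans hsprod.symm))
    rwa [Polynomial.roots_multiset_prod_X_sub_C, Polynomial.roots_multiset_prod_X_sub_C] at h2
  have henergy : cnEnergy (ccc G) = ((Finset.univ.val.map eig).map (fun x => |x|)).sum := by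
    rw [cnEnergy, Finset.sum_eq_multiset_sum, Multiset.map_map]
    rfl
  rw [henergy, hroots, hs_def]
  rw [Multiset.map_add, Multiset.sum_add, Multiset.map_replicate, Multiset.sum_replicate,
    Multiset.map_cons, Multiset.sum_cons, Multiset.map_singleton, Multiset.sum_singleton,
    abs_neg, abs_zero, add_zero]
  rcases eq_or_lt_of_le hm with h1 | h2
  · rw [← h1, hN, ← h1]
    norm_num
  · have hm2 : (2:ℝ) ≤ (m:ℝ) := by exact_mod_cast h2
    have hcast : ((m - 1 : ℕ) : ℝ) = (m:ℝ) - 1 := by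
      rw [Nat.cast_sub hm]; simp
    rw [abs_of_nonneg (by rw [hN]; nlinarith), abs_of_nonneg (by rw [hN]; nlinarith),
      nsmul_eq_mul, hcast, hN]
    ring
end
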